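/- arXiv:2410.18445 — 2 statements merged into one kernel-verified Lean document; each statement's English description precedes it below -/
import Mathlib

section
/- If L is a p×p symmetric matrix satisfying L_{ii} ≤ 1 for all i, L_{ij} ≤ 0 for i ≠ j, and Lv_0 = 0 for some entrywise positive vector v_0, then L is a normalized graph Laplacian: setting D_v = diag(v_0) and A = D_v(I − L)D_v, the matrix A is symmetric with nonnegative entries, its i-th row sum equals (v_0)_i², and L = I − D^{−1/2} A D^{−1/2} where D = D_v². -/
/-- Converse characterization: a symmetric matrix with diagonal ≤ 1,
nonpositive off-diagonals, annihilating a positive vector, is a normalized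
graph Laplacian. -/
theorem stmt6 {p : ℕ} (L : Matrix (Fin p) (Fin p) ℝ) (v0 : Fin p → ℝ)
    (hsym : L.IsSymm) (hv : ∀ i, 0 < v0 i) (hLv : L.mulVec v0 = 0)
    (hdiag : ∀ i, L i i ≤ 1) (hoff : ∀ i j, i ≠ j → L i j ≤ 0) :
    let Dv := Matrix.diagonal v0
    let A := Dv * ((1 : Matrix (Fin p) (Fin p) ℝ) - L) * Dv
    A.IsSymm ∧ (∀ i j, 0 ≤ A i j) ∧ (∀ i, ∑ j, A i j = (v0 i)^2)
    ∧ L = (1 : Matrix (Fin p) (Fin p) ℝ)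
        - Matrix.diagonal (fun i => (v0 i)⁻¹) * A * Matrix.diagonal (fun i => (v0 i)⁻¹) := by
  intro Dv A
  have hne : ∀ i, v0 i ≠ 0 := fun i => (hv i).ne'
  have hAent : ∀ i j, A i j = v0 i * ((1 : Matrix (Fin p) (Fin p) ℝ) - L) i j * v0 j := by
    intro i j
    simp [A, Dv, Matrix.diagonal_mul, Matrix.mul_diagonal]
  refine ⟨?_, ?_, ?_, ?_⟩
  · ext i j
    rw [Matrix.transpose_apply, hAent, hAent]
    have := hsym.apply i j
    simp only [Matrix.sub_apply, Matrix.one_apply]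
    rw [this]
    by_cases h : i = j <;> simp [h, eq_comm] <;> ring
  · intro i j
    rw [hAent]
    rcases eq_or_ne i j with rfl | h
    · have : (0:ℝ) ≤ 1 - L i i := by linarith [hdiag i]
      have := mul_nonneg (mul_nonneg (hv i).le this) (hv i).le
      simpa using this
    · have : (0:ℝ) ≤ 0 - L i j := by linarith [hoff i j h]
      have := mul_nonneg (mul_nonneg (hv i).le this) (hv j).le
      simpa [Matrix.one_apply, h] using this
  · intro i
    have hLv' : ∑ j, L i j * v0 j = 0 := by
      have := congrFun hLv i
      simpa [Matrix.mulVec, dotProduct] using this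
    calc ∑ j, A i j = ∑ j, v0 i * (((1 : Matrix (Fin p) (Fin p) ℝ) i j - L i j) * v0 j) := by
          simp [hAent, Matrix.sub_apply, mul_assoc]
      _ = v0 i * ∑ j, ((1 : Matrix (Fin p) (Fin p) ℝ) i j - L i j) * v0 j := by
          rw [Finset.mul_sum]
      _ = v0 i * (∑ j, (1 : Matrix (Fin p) (Fin p) ℝ) i j * v0 j - ∑ j, L i j * v0 j) := by
          rw [← Finset.sum_sub_distrib]; simp only [sub_mul]
      _ = (v0 i)^2 := by
          simp [Matrix.one_apply, hLv']; ring
  · ext i j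
    have : (Matrix.diagonal (fun i => (v0 i)⁻¹) * A * Matrix.diagonal (fun i => (v0 i)⁻¹)) i j
        = (v0 i)⁻¹ * A i j * (v0 j)⁻¹ := by
      simp [Matrix.diagonal_mul, Matrix.mul_diagonal, mul_comm]
    have hc : (v0 i)⁻¹ * (v0 i * ((1 : Matrix (Fin p) (Fin p) ℝ) - L) i j * v0 j) * (v0 j)⁻¹
        = ((1 : Matrix (Fin p) (Fin p) ℝ) - L) i j := by
      rw [mul_assoc, mul_inv_cancel_right₀ (hne j), inv_mul_cancel_left₀ (hne i)]
    rw [Matrix.sub_apply, this, hAent, hc, Matrix.sub_apply]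
    ring
end

section
/- GAR identifiability: if (θ₀ I + θ₁ L)^{−2} = (θ̃₀ I + θ̃₁ L̃)^{−2} where θ₀, θ₁, θ̃₀, θ̃₁ > 0 and L, L̃ are symmetric positive semi-definite with smallest eigenvalue 0, then θ₀ = θ̃₀ and θ₁·L = θ̃₁·L̃. -/
open Matrix

lemma psd_smul {n : ℕ} {M : Matrix (Fin n) (Fin n) ℝ} (hM : M.PosSemidef)
    {c : ℝ} (hc : 0 ≤ c) : (c • M).PosSemidef := by
  rw [Matrix.posSemidef_iff_dotProduct_mulVec]
  constructor
  · rw [Matrix.IsHermitian, Matrix.conjTranspose_smul, star_trivial, hM.1.eq]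
  · intro x
    have := hM.dotProduct_mulVec_nonneg x
    simp only [Matrix.smul_mulVec, dotProduct_smul, smul_eq_mul]
    exact mul_nonneg hc this

lemma pd_smul_one {n : ℕ} {c : ℝ} (hc : 0 < c) :
    (c • (1 : Matrix (Fin n) (Fin n) ℝ)).PosDef := by
  rw [Matrix.posDef_iff_dotProduct_mulVec]
  constructor
  · rw [Matrix.IsHermitian, Matrix.conjTranspose_smul, star_trivial, Matrix.conjTranspose_one]
  · intro x hx
    simp only [Matrix.smul_mulVec, Matrix.one_mulVec, dotProduct_smul, smul_eq_mul]
    exact mul_pos hc (by simpa using Matrix.dotProduct_star_self_pos_iff.mpr hx)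

lemma key_ineq {n : ℕ} (a b c : ℝ) (hc : 0 < c)
    {L : Matrix (Fin n) (Fin n) ℝ} (hL : L.PosSemidef)
    {v : Fin n → ℝ} (hv : v ≠ 0)
    (h : a • v = b • v + c • (L.mulVec v)) : b ≤ a := by
  have h1 : 0 ≤ v ⬝ᵥ L.mulVec v := by simpa using hL.dotProduct_mulVec_nonneg v
  have h2 : 0 < v ⬝ᵥ v := by simpa using Matrix.dotProduct_star_self_pos_iff.mpr hv
  have h3 : a * (v ⬝ᵥ v) = b * (v ⬝ᵥ v) + c * (v ⬝ᵥ L.mulVec v) := by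
    have := congrArg (fun w => v ⬝ᵥ w) h
    simpa [dotProduct_add, dotProduct_smul, smul_eq_mul] using this
  nlinarith

/-- GAR identifiability: equality of the covariances implies θ₀ = θ̃₀ and
θ₁·L = θ̃₁·L̃. -/
theorem stmt9 {p : ℕ} (θ₀ θ₁ θ₀' θ₁' : ℝ)
    (hθ₀ : 0 < θ₀) (hθ₁ : 0 < θ₁) (hθ₀' : 0 < θ₀') (hθ₁' : 0 < θ₁')
    (L L' : Matrix (Fin p) (Fin p) ℝ)
    (hL : L.PosSemidef) (hL' : L'.PosSemidef)
    (h0 : ∃ v : Fin p → ℝ, v ≠ 0 ∧ L.mulVec v = 0)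
    (h0' : ∃ v : Fin p → ℝ, v ≠ 0 ∧ L'.mulVec v = 0)
    (heq : ((θ₀ • (1 : Matrix (Fin p) (Fin p) ℝ) + θ₁ • L)^2)⁻¹
         = ((θ₀' • (1 : Matrix (Fin p) (Fin p) ℝ) + θ₁' • L')^2)⁻¹) :
    θ₀ = θ₀' ∧ θ₁ • L = θ₁' • L' := by
  set A := θ₀ • (1 : Matrix (Fin p) (Fin p) ℝ) + θ₁ • L with hA_def
  set A' := θ₀' • (1 : Matrix (Fin p) (Fin p) ℝ) + θ₁' • L' with hA'_def
  have hA : A.PosDef := (pd_smul_one hθ₀).add_posSemidef (psd_smul hL hθ₁.le)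
  have hA' : A'.PosDef := (pd_smul_one hθ₀').add_posSemidef (psd_smul hL' hθ₁'.le)
  have hdA : IsUnit (A ^ 2).det := by
    rw [Matrix.det_pow]; exact (hA.isUnit.map (Matrix.detMonoidHom)).pow 2
  have hdA' : IsUnit (A' ^ 2).det := by
    rw [Matrix.det_pow]; exact (hA'.isUnit.map (Matrix.detMonoidHom)).pow 2
  have hsq : A ^ 2 = A' ^ 2 := by
    have := congrArg (·⁻¹) heq
    simpa [Matrix.nonsing_inv_nonsing_inv _ hdA, Matrix.nonsing_inv_nonsing_inv _ hdA'] using this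
  have hAA' : A = A' := by
    open scoped MatrixOrder in
    exact (CFC.sq_eq_sq_iff A A' hA.posSemidef.nonneg hA'.posSemidef.nonneg).mp hsq
  obtain ⟨v, hv, hLv⟩ := h0
  obtain ⟨v', hv', hL'v⟩ := h0'
  have hAv : A.mulVec v = θ₀ • v := by
    simp [hA_def, Matrix.add_mulVec, Matrix.smul_mulVec, hLv]
  have hA'v : A'.mulVec v = θ₀' • v + θ₁' • (L'.mulVec v) := by
    simp [hA'_def, Matrix.add_mulVec, Matrix.smul_mulVec]
  have hAv' : A'.mulVec v' = θ₀' • v' := by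
    simp [hA'_def, Matrix.add_mulVec, Matrix.smul_mulVec, hL'v]
  have hA'v' : A.mulVec v' = θ₀ • v' + θ₁ • (L.mulVec v') := by
    simp [hA_def, Matrix.add_mulVec, Matrix.smul_mulVec]
  have h1 : θ₀' ≤ θ₀ := by
    refine key_ineq θ₀ θ₀' θ₁' hθ₁' hL' hv ?_
    rw [← hAv, hAA', hA'v]
  have h2 : θ₀ ≤ θ₀' := by
    refine key_ineq θ₀' θ₀ θ₁ hθ₁ hL hv' ?_
    rw [← hAv', ← hAA', hA'v']
  have h0eq : θ₀ = θ₀' := le_antisymm h2 h1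
  refine ⟨h0eq, ?_⟩
  have : θ₀ • (1 : Matrix (Fin p) (Fin p) ℝ) + θ₁ • L
       = θ₀ • (1 : Matrix (Fin p) (Fin p) ℝ) + θ₁' • L' := by
    rw [hA_def] at hAA'; rw [hAA', hA'_def, h0eq]
  exact add_left_cancel this
end
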